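/- arXiv:2404.05017 — 3 statements merged into one kernel-verified Lean document; each statement's English description precedes it below -/
import Mathlib

section
/- In the setting of the previous statement, the reflection unit (e, 1_B) : (g : A → I B) → (m : X → I B) is a regular epimorphism in the comma category A ↓ I; hence (A ↓↣ I) is a regular epireflective subcategory of A ↓ I. -/
open CategoryTheory CategoryTheory.Limits

/-- The reflection unit `(e, 𝟙 B) : (g : A ⟶ I B) ⟶ (m : X ⟶ I B)`
in the comma category `A ↓ I`, where `g = e ≫ m`. -/
def reflectionUnit {A : Type u₁} {B : Type u₂} [Category.{v₁} A] [Category.{v₂} B]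
    {I : B ⥤ A} (c : Comma (𝟭 A) I) (X : A) (e : c.left ⟶ X) (m : X ⟶ I.obj c.right)
    (hfac : e ≫ m = c.hom) :
    c ⟶ ({ left := X, right := c.right, hom := m } : Comma (𝟭 A) I) where
  left := e
  right := 𝟙 c.right
  w := by simp [hfac]

/-! Colimits in `Comma L R` are detected componentwise as soon as `L` preserves them
(`Comma.fstSndJointlyReflectColimit`). Hence `(e, 𝟙 B)` is the coequalizer of the pair of comma
morphisms whose left components present `e` as a coequalizer and whose right components are
both `𝟙 B`. -/

namespace CategoryTheory.Comma

variable {A : Type u₁} {B : Type u₂} {T : Type u₃} [Category.{v₁} A] [Category.{v₂} B]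
  [Category.{v₃} T] {L : A ⥤ T} {R : B ⥤ T}

noncomputable def regularEpiOfRegularEpiLeft [PreservesColimitsOfShape WalkingParallelPair L]
    {c d : Comma L R} (f : c ⟶ d) (hf : RegularEpi f.left) [IsIso f.right] : RegularEpi f where
  W := ⟨hf.W, c.right, L.map hf.left ≫ c.hom⟩
  left := ⟨hf.left, 𝟙 _, by simp⟩
  right := ⟨hf.right, 𝟙 _, by
    rw [Functor.map_id, Category.comp_id, ← cancel_mono (R.map f.right)]
    simp only [Category.assoc, ← f.w, ← L.map_comp_assoc, hf.w]⟩
  w := by ext <;> simp [hf.w]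
  isColimit := fstSndJointlyReflectColimit
    ((isColimitMapCoconeCoforkEquiv _ _).symm hf.isColimit)
    ((isColimitMapCoconeCoforkEquiv _ _).symm
      ((isColimitIdCofork rfl).ofIsoColimit (Cofork.ext (asIso f.right) (Category.id_comp _))))

end CategoryTheory.Comma

theorem reflection_unit_regularEpi_general {A : Type u₁} {B : Type u₂}
    [Category.{v₁} A] [Category.{v₂} B] (I : B ⥤ A)
    (c : Comma (𝟭 A) I) (X : A) (e : c.left ⟶ X) (m : X ⟶ I.obj c.right)
    (he : Nonempty (RegularEpi e)) (hfac : e ≫ m = c.hom) :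
    Nonempty (RegularEpi (reflectionUnit c X e m hfac)) :=
  have : IsIso (reflectionUnit c X e m hfac).right := inferInstanceAs (IsIso (𝟙 _))
  ⟨Comma.regularEpiOfRegularEpiLeft _ he.some⟩

/-- In a category `A` with (regular epi, mono)-factorizations, if `c.hom = e ≫ m`
is such a factorization, then the reflection unit `(e, 𝟙 B)` is a regular epimorphism
in the comma category `A ↓ I`; hence the full subcategory of monomorphisms
`(A ↓↣ I)` is a regular epireflective subcategory of `A ↓ I`. -/
theorem reflection_unit_regularEpi {A : Type u₁} {B : Type u₂}
    [Category.{v₁} A] [Category.{v₂} B] (I : B ⥤ A)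
    (hfact : ∀ {A₁ A₂ : A} (g : A₁ ⟶ A₂),
      ∃ (X : A) (e : A₁ ⟶ X) (m : X ⟶ A₂), Nonempty (RegularEpi e) ∧ Mono m ∧ e ≫ m = g)
    (c : Comma (𝟭 A) I) (X : A) (e : c.left ⟶ X) (m : X ⟶ I.obj c.right)
    (he : Nonempty (RegularEpi e)) (hm : Mono m) (hfac : e ≫ m = c.hom) :
    Nonempty (RegularEpi (reflectionUnit c X e m hfac)) :=
  reflection_unit_regularEpi_general I c X e m he hfac
end

section
/- Let V be a commutative unital quantale. For a set X with a family S of maps X → V, let a_S(x, y) = ⨅_{φ ∈ S} hom(φ(x), φ(y)) be the initial V-category structure. Then the set of V-functors from (X, a_S) to (V, hom) equals the closure of S under the operations: (i) every a_S(x, −) belongs to it; (ii) it is closed under the property ψ = ⋁_y ψ(y) ⊗ a_S(y, −). In particular, if S is closed under pointwise suprema, pointwise tensor by constants, and contains all a_S(x, −), then S = V-Cat((X, a_S), (V, hom)). -/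
/-- The internal hom of a commutative quantale `V`: `hom u v = ⋁ {w | u ⊗ w ≤ v}`. -/
def qhom {V : Type*} [CompleteLattice V] [CommMonoid V] (u v : V) : V :=
  sSup {w | u * w ≤ v}

/-- The initial `V`-category structure on `X` induced by a family `S` of maps `X → V`. -/
def initStruct {V : Type*} [CompleteLattice V] [CommMonoid V] {X : Type*}
    (S : Set (X → V)) (x y : X) : V :=
  ⨅ φ ∈ S, qhom (φ x) (φ y)

/-- A map `ψ : X → V` is a `V`-functor `(X, a) → (V, hom)`. -/
def IsVFunctor {V : Type*} [CompleteLattice V] [CommMonoid V] {X : Type*}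
    (a : X → X → V) (ψ : X → V) : Prop :=
  ∀ y z : X, a y z ≤ qhom (ψ y) (ψ z)

/-! Since `a_S` is transitive, the representables `a_S(x, −)` are `V`-functors; since it is
reflexive, every `V`-functor `ψ` is the weighted colimit `⋁_y ψ(y) ⊗ a_S(y, −)` of representables
(Yoneda). Closure of `S` under tensoring by constants and suprema therefore puts every
`V`-functor back in `S`, while `φ ∈ S` is a `V`-functor because `a_S` is an infimum over `S`. -/

section Quantale

variable {V : Type*} [CompleteLattice V] [CommMonoid V]

lemma le_qhom_of_mul_le {u v w : V} (h : u * w ≤ v) : w ≤ qhom u v :=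
  le_sSup h

lemma one_le_qhom_self (u : V) : 1 ≤ qhom u u :=
  le_qhom_of_mul_le (mul_one u).le

lemma mul_qhom_le (hadj : ∀ u v w : V, u * w ≤ v ↔ w ≤ qhom u v) (u v : V) :
    u * qhom u v ≤ v :=
  (hadj u v _).2 le_rfl

lemma mul_le_mul_left_of_adj (hadj : ∀ u v w : V, u * w ≤ v ↔ w ≤ qhom u v)
    (u : V) {w w' : V} (h : w ≤ w') : u * w ≤ u * w' :=
  (hadj u _ w).2 (h.trans (le_qhom_of_mul_le le_rfl))

lemma mul_le_mul_of_adj (hadj : ∀ u v w : V, u * w ≤ v ↔ w ≤ qhom u v)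
    {u u' w w' : V} (hu : u ≤ u') (hw : w ≤ w') : u * w ≤ u' * w' :=
  calc u * w ≤ u * w' := mul_le_mul_left_of_adj hadj u hw
    _ = w' * u := mul_comm _ _
    _ ≤ w' * u' := mul_le_mul_left_of_adj hadj w' hu
    _ = u' * w' := mul_comm _ _

lemma qhom_mul_qhom_le (hadj : ∀ u v w : V, u * w ≤ v ↔ w ≤ qhom u v) (u v w : V) :
    qhom u v * qhom v w ≤ qhom u w := by
  refine le_qhom_of_mul_le ?_
  calc u * (qhom u v * qhom v w) = u * qhom u v * qhom v w := (mul_assoc _ _ _).symm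
    _ ≤ v * qhom v w := mul_le_mul_of_adj hadj (mul_qhom_le hadj u v) le_rfl
    _ ≤ w := mul_qhom_le hadj v w

end Quantale

section VFunctor

variable {V : Type*} [CompleteLattice V] [CommMonoid V] {X : Type*}

lemma IsVFunctor.eq_iSup_mul (hadj : ∀ u v w : V, u * w ≤ v ↔ w ≤ qhom u v)
    {a : X → X → V} (hrefl : ∀ z, 1 ≤ a z z) {ψ : X → V} (hψ : IsVFunctor a ψ) (z : X) :
    ψ z = ⨆ y, ψ y * a y z := by
  apply le_antisymm
  · calc ψ z = ψ z * 1 := (mul_one _).symm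
      _ ≤ ψ z * a z z := mul_le_mul_left_of_adj hadj _ (hrefl z)
      _ ≤ ⨆ y, ψ y * a y z := le_iSup (fun y => ψ y * a y z) z
  · exact iSup_le fun y =>
      (mul_le_mul_left_of_adj hadj _ (hψ y z)).trans (mul_qhom_le hadj _ _)

variable {S : Set (X → V)}

lemma one_le_initStruct_self (z : X) : 1 ≤ initStruct S z z :=
  le_iInf₂ fun φ _ => one_le_qhom_self (φ z)

lemma initStruct_le_qhom {φ : X → V} (hφ : φ ∈ S) (y z : X) :
    initStruct S y z ≤ qhom (φ y) (φ z) :=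
  iInf₂_le φ hφ

lemma initStruct_mul_le (hadj : ∀ u v w : V, u * w ≤ v ↔ w ≤ qhom u v) (x y z : X) :
    initStruct S x y * initStruct S y z ≤ initStruct S x z :=
  le_iInf₂ fun _ hφ =>
    (mul_le_mul_of_adj hadj (initStruct_le_qhom hφ x y) (initStruct_le_qhom hφ y z)).trans
      (qhom_mul_qhom_le hadj _ _ _)

lemma isVFunctor_of_mem {φ : X → V} (hφ : φ ∈ S) : IsVFunctor (initStruct S) φ :=
  initStruct_le_qhom hφ

lemma isVFunctor_initStruct (hadj : ∀ u v w : V, u * w ≤ v ↔ w ≤ qhom u v) (x : X) :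
    IsVFunctor (initStruct S) (initStruct S x) :=
  fun y z => le_qhom_of_mul_le (initStruct_mul_le hadj x y z)

end VFunctor

/-- For the initial structure `a_S`: the representables `a_S(x, −)` are `V`-functors,
every `φ ∈ S` is a `V`-functor, every `V`-functor `ψ` satisfies
`ψ = ⋁_y ψ(y) ⊗ a_S(y, −)`, and hence if `S` contains all representables and is closed
under pointwise suprema and pointwise tensor by constants, then `S` equals the set of
all `V`-functors `(X, a_S) → (V, hom)`. -/
theorem functors_from_initStruct {V : Type*} [CompleteLattice V] [CommMonoid V]
    (hadj : ∀ u v w : V, u * w ≤ v ↔ w ≤ qhom u v)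
    {X : Type*} (S : Set (X → V))
    (hrep : ∀ x : X, (fun y => initStruct S x y) ∈ S)
    (hsup : ∀ f : X → (X → V), (∀ y, f y ∈ S) → (fun x => ⨆ y, f y x) ∈ S)
    (htens : ∀ φ ∈ S, ∀ v : V, (fun x => v * φ x) ∈ S) :
    (∀ x : X, IsVFunctor (initStruct S) (fun y => initStruct S x y)) ∧
    (∀ φ ∈ S, IsVFunctor (initStruct S) φ) ∧
    (∀ ψ : X → V, IsVFunctor (initStruct S) ψ →
      ∀ z : X, ψ z = ⨆ y : X, ψ y * initStruct S y z) ∧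
    S = {ψ : X → V | IsVFunctor (initStruct S) ψ} := by
  have decomp : ∀ ψ : X → V, IsVFunctor (initStruct S) ψ →
      ∀ z : X, ψ z = ⨆ y : X, ψ y * initStruct S y z :=
    fun ψ hψ => hψ.eq_iSup_mul hadj one_le_initStruct_self
  refine ⟨isVFunctor_initStruct hadj, fun φ hφ => isVFunctor_of_mem hφ, decomp, ?_⟩
  refine Set.Subset.antisymm (fun φ hφ => isVFunctor_of_mem hφ) fun ψ hψ => ?_
  rw [funext (decomp ψ hψ)]
  exact hsup _ fun y => htens _ (hrep y) (ψ y)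
end

section
/- For a commutative unital quantale V, the V-category (V, hom) is initially dense in V-Cat: for any V-category (X, a), the structure a is the initial structure with respect to the family of all V-functors (X, a) → (V, hom), i.e., a(x, y) = ⨅_{ψ ∈ V-Cat((X,a),(V,hom))} hom(ψ(x), ψ(y)). -/
section QuantaleHom

variable {V : Type*} [CompleteLattice V] [CommMonoid V]

theorem mul_le_mul_left_of_qhom_adj (hadj : ∀ u v w : V, u * w ≤ v ↔ w ≤ qhom u v)
    (u : V) {w w' : V} (h : w' ≤ w) : u * w' ≤ u * w :=
  (hadj u _ w').mpr (h.trans ((hadj u _ w).mp le_rfl))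

theorem qhom_le_of_one_le (hadj : ∀ u v w : V, u * w ≤ v ↔ w ≤ qhom u v)
    {u : V} (v : V) (hu : 1 ≤ u) : qhom u v ≤ v :=
  calc qhom u v = qhom u v * 1 := (mul_one _).symm
    _ ≤ qhom u v * u := mul_le_mul_left_of_qhom_adj hadj _ hu
    _ = u * qhom u v := mul_comm _ _
    _ ≤ v := (hadj u v _).mpr le_rfl

/-- Representables `a x` are `V`-functors `(X, a) → (V, hom)`. -/
theorem le_qhom_representable (hadj : ∀ u v w : V, u * w ≤ v ↔ w ≤ qhom u v)
    {X : Type*} (a : X → X → V) (htrans : ∀ x y z : X, a x y * a y z ≤ a x z)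
    (x y z : X) : a y z ≤ qhom (a x y) (a x z) :=
  (hadj _ _ _).mp (htrans x y z)

end QuantaleHom

/-- `(V, hom)` is initially dense in `V`-Cat: for every `V`-category `(X, a)`,
`a(x, y) = ⨅_{ψ ∈ V-Cat((X,a),(V,hom))} hom(ψ x, ψ y)`. -/
theorem initially_dense {V : Type*} [CompleteLattice V] [CommMonoid V]
    (hadj : ∀ u v w : V, u * w ≤ v ↔ w ≤ qhom u v)
    {X : Type*} (a : X → X → V)
    (hrefl : ∀ x : X, 1 ≤ a x x)
    (htrans : ∀ x y z : X, a x y * a y z ≤ a x z) :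
    ∀ x y : X,
      a x y = ⨅ ψ ∈ {ψ : X → V | ∀ y z : X, a y z ≤ qhom (ψ y) (ψ z)},
        qhom (ψ x) (ψ y) := by
  intro x y
  apply le_antisymm
  · exact le_iInf₂ fun ψ hψ => hψ x y
  · calc _ ≤ qhom (a x x) (a x y) :=
          iInf₂_le (a x ·) (le_qhom_representable hadj a htrans x)
      _ ≤ a x y := qhom_le_of_one_le hadj _ (hrefl x)
end
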